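/- For any bouquet B, the constant coefficient of ∂ε_B(z) is non-zero if and only if every chord of B is untwisted and the intersection graph I(B) is bipartite. -/

import Mathlib

open Polynomial
open scoped Classical

/-- A bouquet (one-vertex ribbon graph) with `n` loops, encoded as a signed chord
diagram on the circle `ZMod (2*n)`: `σ` is a fixed-point-free involution pairing the
two endpoints of each chord, and `t` records which chords are twisted.
(For `n = 0` the data is pinned to a canonical value, since `ZMod 0 = ℤ`.) -/
structure Bouquet (n : ℕ) where
  σ : ZMod (2*n) → ZMod (2*n)
  invol : ∀ i, σ (σ i) = i
  fpf : ∀ i, σ i ≠ i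
  t : ZMod (2*n) → Bool
  t_inv : ∀ i, t (σ i) = t i
  pin_σ : n = 0 → ∀ i, σ i = -(i+1)
  pin_t : n = 0 → ∀ i, t i = false

namespace Bouquet

variable {n : ℕ}

/-- A canonical (planar, all-untwisted) bouquet with `m` chords. -/
def canonical (m : ℕ) : Bouquet m where
  σ := fun x => -(x+1)
  invol := by intro i; ring
  fpf := by
    intro i h
    have h1 : (2 : ZMod (2*m)) * i + 1 = 0 := by linear_combination - h
    have h2 := congrArg (ZMod.castHom (⟨m, rfl⟩ : (2:ℕ) ∣ 2*m) (ZMod 2)) h1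
    rw [map_add, map_mul, map_one, map_zero, map_ofNat] at h2
    have h3 : ((2 : ℕ) : ZMod 2) = 0 := by decide
    simp only [Nat.cast_ofNat] at h3
    rw [h3, zero_mul, zero_add] at h2
    exact one_ne_zero h2
  t := fun _ => false
  t_inv := fun _ => rfl
  pin_σ := fun _ _ => rfl
  pin_t := fun _ _ => rfl

/-- Transport of a bouquet structure along a bijective relabelling of a
`σ`-invariant set of endpoints. -/
def transport {m : ℕ} (hm : m ≠ 0) (B : Bouquet n) (S : Finset (ZMod (2*n)))
    (hS : ∀ i ∈ S, B.σ i ∈ S) (e : ZMod (2*m) ≃ {x : ZMod (2*n) // x ∈ S}) :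
    Bouquet m where
  σ := fun x => e.symm ⟨B.σ (e x), hS _ (e x).2⟩
  invol := by intro x; simp [B.invol]
  fpf := by
    intro x h
    apply B.fpf ((e x : {x // x ∈ S}) : ZMod (2*n))
    have h2 := congrArg (fun y => (e y : {x // x ∈ S})) h
    simp only [Equiv.apply_symm_apply] at h2
    exact congrArg Subtype.val h2
  t := fun x => B.t (e x)
  t_inv := by intro x; simp [B.t_inv]
  pin_σ := fun h0 => absurd h0 hm
  pin_t := fun h0 => absurd h0 hm

/-- The order isomorphism `ZMod M ≃ Fin M` (via `ZMod.val`), for `M ≠ 0`. -/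
def zmodFinEquiv (M : ℕ) [NeZero M] : ZMod M ≃ Fin M where
  toFun x := ⟨x.val, ZMod.val_lt x⟩
  invFun k := (k.val : ZMod M)
  left_inv x := ZMod.natCast_rightInverse x
  right_inv k := by
    ext
    simpa using ZMod.val_cast_of_lt k.isLt

/-- The induced signed chord diagram `B|S` on a `σ`-invariant set `S` of endpoints,
relabelled order-preservingly by `ZMod (2*(S.card/2))`.  (Junk value otherwise.) -/
noncomputable def restrict (B : Bouquet n) (S : Finset (ZMod (2*n))) :
    Bouquet (S.card / 2) :=
  if h : n ≠ 0 ∧ S.card / 2 ≠ 0 ∧ S.card = 2 * (S.card / 2) ∧ ∀ i ∈ S, B.σ i ∈ S then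
    haveI h1 : NeZero (2*n) := ⟨by omega⟩
    haveI h2 : NeZero (2*(S.card/2)) := ⟨by omega⟩
    let E := zmodFinEquiv (2*n)
    let S' : Finset (Fin (2*n)) := S.image E
    have hc : S'.card = 2*(S.card/2) := by
      rw [Finset.card_image_of_injective _ E.injective]; exact h.2.2.1
    transport h.2.1 B S h.2.2.2
      ((zmodFinEquiv (2*(S.card/2))).trans
        ((S'.orderIsoOfFin hc).toEquiv.trans (Equiv.subtypeEquiv E.symm (by
          intro a
          simp only [S', Finset.mem_image]
          constructor
          · rintro ⟨b, hb, rfl⟩; simpa using hb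
          · intro ha; exact ⟨E.symm a, ha, by simp⟩))))
  else canonical (S.card / 2)

/-- The boundary-tracing permutation `Φ` of a bouquet. -/
def Phi (B : Bouquet n) : ZMod (2*n) × Bool → ZMod (2*n) × Bool :=
  fun p =>
    match p with
    | (i, false) => if B.t (i+1) = true then (B.σ (i+1) - 1, true) else (B.σ (i+1), false)
    | (i, true) => if B.t i = true then (B.σ i, false) else (B.σ i - 1, true)

/-- The number of classes of the equivalence relation generated by a relation. -/
noncomputable def relClasses {α : Type*} (r : α → α → Prop) : ℕ :=
  Nat.card (Quotient (Relation.EqvGen.setoid r))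

/-- The number of orbits of (the permutation generated by) a self-map. -/
noncomputable def orbitCount {α : Type*} (f : α → α) : ℕ :=
  relClasses (fun x y => f x = y)

/-- The number of boundary components `f(B)`: half the number of orbits of `Φ`. -/
noncomputable def numBoundary (B : Bouquet n) : ℕ :=
  if n = 0 then 1 else orbitCount (Phi B) / 2

/-- The Euler genus `ε(B) = 1 + n - f(B)`. -/
noncomputable def eulerGenus (B : Bouquet n) : ℕ := 1 + n - numBoundary B

/-- `i` and `j` represent the same chord of `B`. -/
def SameChord (B : Bouquet n) (i j : ZMod (2*n)) : Prop := j = i ∨ j = B.σ i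

/-- The chords through `i` and through `j` interlace: exactly one endpoint of the
chord through `j` lies strictly between the two endpoints of the chord through `i`
(so the four endpoints alternate in the cyclic order). -/
def Interlace (B : Bouquet n) (i j : ZMod (2*n)) : Prop :=
  Xor' (min i.val (B.σ i).val < j.val ∧ j.val < max i.val (B.σ i).val)
       (min i.val (B.σ i).val < (B.σ j).val ∧ (B.σ j).val < max i.val (B.σ i).val)

/-- The partial-dual Euler genus polynomial
`∂ε_B(z) = Σ_{A ⊆ chords(B)} z^(ε(B|A) + ε(B|Aᶜ))`, the sum running over all
(σ-invariant endpoint sets of) sets of chords of `B`. -/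
noncomputable def pdPoly (B : Bouquet n) : Polynomial ℤ :=
  if h : n = 0 then 1 else
    haveI : NeZero (2*n) := ⟨by omega⟩
    ∑ S ∈ Finset.univ.filter (fun S : Finset (ZMod (2*n)) => ∀ i ∈ S, B.σ i ∈ S),
      (Polynomial.X : Polynomial ℤ) ^
        (eulerGenus (B.restrict S) + eulerGenus (B.restrict Sᶜ))


section Generic
variable {α : Type*}

lemma relClasses_le_of_imp [Finite α] {r s : α → α → Prop}
    (h : ∀ x y, r x y → Relation.EqvGen s x y) : relClasses s ≤ relClasses r := by
  have h' : ∀ x y, Relation.EqvGen r x y → Relation.EqvGen s x y := by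
    intro x y hxy
    induction hxy with
    | rel x y h'' => exact h _ _ h''
    | refl x => exact .refl x
    | symm _ _ _ ih => exact ih.symm
    | trans _ _ _ _ _ ih1 ih2 => exact ih1.trans _ _ _ ih2
  refine Nat.card_le_card_of_surjective
    (Quotient.map' (s₁ := Relation.EqvGen.setoid r) (s₂ := Relation.EqvGen.setoid s)
      id (fun x y hxy => h' x y hxy)) ?_
  rintro ⟨x⟩
  exact ⟨Quotient.mk'' x, rfl⟩

/-- relation `r` plus one extra identification `a ~ b`. -/
def pairRel (r : α → α → Prop) (a b : α) : α → α → Prop :=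
  fun x y => r x y ∨ (x = a ∧ y = b) ∨ (x = b ∧ y = a)

lemma eqvGen_pairRel_iff {r : α → α → Prop} {a b x y : α} :
    Relation.EqvGen (pairRel r a b) x y ↔ Relation.EqvGen r x y ∨
      (Relation.EqvGen r x a ∧ Relation.EqvGen r b y) ∨
      (Relation.EqvGen r x b ∧ Relation.EqvGen r a y) := by
  constructor
  · intro h
    induction h with
    | rel u v huv =>
      rcases huv with h' | ⟨rfl, rfl⟩ | ⟨rfl, rfl⟩
      · exact Or.inl (.rel _ _ h')
      · exact Or.inr (Or.inl ⟨.refl _, .refl _⟩)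
      · exact Or.inr (Or.inr ⟨.refl _, .refl _⟩)
    | refl u => exact Or.inl (.refl u)
    | symm u v _ ih =>
      rcases ih with h' | ⟨h1, h2⟩ | ⟨h1, h2⟩
      · exact Or.inl h'.symm
      · exact Or.inr (Or.inr ⟨h2.symm, h1.symm⟩)
      · exact Or.inr (Or.inl ⟨h2.symm, h1.symm⟩)
    | trans u v w _ _ ih1 ih2 =>
      have et : ∀ {p q z : α}, Relation.EqvGen r p q → Relation.EqvGen r q z →
          Relation.EqvGen r p z := fun h1 h2 => h1.trans _ _ _ h2
      have es : ∀ {p q : α}, Relation.EqvGen r p q → Relation.EqvGen r q p :=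
        fun h1 => h1.symm
      rcases ih1 with h1 | ⟨h1, h1'⟩ | ⟨h1, h1'⟩ <;>
        rcases ih2 with h2 | ⟨h2, h2'⟩ | ⟨h2, h2'⟩
      · exact Or.inl (et h1 h2)
      · exact Or.inr (Or.inl ⟨et h1 h2, h2'⟩)
      · exact Or.inr (Or.inr ⟨et h1 h2, h2'⟩)
      · exact Or.inr (Or.inl ⟨h1, et h1' h2⟩)
      · exact Or.inl (et h1 (et (es (et h1' h2)) h2'))
      · exact Or.inl (et h1 h2')
      · exact Or.inr (Or.inr ⟨h1, et h1' h2⟩)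
      · exact Or.inl (et h1 h2')
      · exact Or.inl (et h1 (et (es (et h1' h2)) h2'))
  · intro h
    have hr : ∀ u v, Relation.EqvGen r u v → Relation.EqvGen (pairRel r a b) u v :=
      fun u v huv => huv.mono (fun x y hxy => Or.inl hxy)
    have hab : Relation.EqvGen (pairRel r a b) a b := .rel _ _ (Or.inr (Or.inl ⟨rfl, rfl⟩))
    rcases h with h' | ⟨h1, h2⟩ | ⟨h1, h2⟩
    · exact hr _ _ h'
    · exact ((hr _ _ h1).trans _ _ _ hab).trans _ _ _ (hr _ _ h2)
    · exact ((hr _ _ h1).trans _ _ _ hab.symm).trans _ _ _ (hr _ _ h2)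

end Generic

section Generic2
variable {α : Type*}

lemma relClasses_le_pairRel_add_one [Finite α] (r : α → α → Prop) (a b : α) :
    relClasses r ≤ relClasses (pairRel r a b) + 1 := by
  classical
  cases nonempty_fintype α
  set sr := Relation.EqvGen.setoid r with hsr
  set ss := Relation.EqvGen.setoid (pairRel r a b) with hss
  have hmono : ∀ x y : α, Relation.EqvGen r x y → Relation.EqvGen (pairRel r a b) x y :=
    fun x y h => h.mono (fun u v huv => Or.inl huv)
  let g : Quotient sr → Quotient ss := Quotient.map' id (fun x y hxy => hmono x y hxy)
  have hkey : ∀ u v : Quotient sr, g u = g v →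
      u = v ∨ ((u = ⟦a⟧ ∨ u = ⟦b⟧) ∧ (v = ⟦a⟧ ∨ v = ⟦b⟧)) := by
    refine fun u v => Quotient.inductionOn₂ u v ?_
    intro x y hxy
    have : Relation.EqvGen (pairRel r a b) x y := Quotient.exact' hxy
    rcases eqvGen_pairRel_iff.1 this with h' | ⟨h1, h2⟩ | ⟨h1, h2⟩
    · exact Or.inl (Quotient.sound' h')
    · exact Or.inr ⟨Or.inl (Quotient.sound' h1), Or.inr (Quotient.sound' h2.symm)⟩
    · exact Or.inr ⟨Or.inr (Quotient.sound' h1), Or.inl (Quotient.sound' h2.symm)⟩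
  have hinj : Set.InjOn g ↑(Finset.univ.erase (⟦a⟧ : Quotient sr)) := by
    intro u hu v hv huv
    have hu' : u ≠ ⟦a⟧ := (Finset.mem_erase.1 (Finset.mem_coe.1 hu)).1
    have hv' : v ≠ ⟦a⟧ := (Finset.mem_erase.1 (Finset.mem_coe.1 hv)).1
    rcases hkey u v huv with h | ⟨h1, h2⟩
    · exact h
    · rcases h1 with rfl | rfl
      · exact absurd rfl hu'
      · rcases h2 with rfl | rfl
        · exact absurd rfl hv'
        · rfl
  have hcard : (Finset.univ.erase (⟦a⟧ : Quotient sr)).card ≤ Fintype.card (Quotient ss) := by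
    have := Finset.card_le_card_of_injOn g (fun u _ => Finset.mem_univ _) hinj
    simpa using this
  have : Fintype.card (Quotient sr) - 1 ≤ Fintype.card (Quotient ss) := by
    rw [← Finset.card_univ]
    have := Finset.card_erase_le (s := (Finset.univ : Finset (Quotient sr))) (a := ⟦a⟧)
    have h2 := Finset.card_erase_of_mem (Finset.mem_univ (⟦a⟧ : Quotient sr))
    omega
  have h1 : 1 ≤ Fintype.card (Quotient sr) := Fintype.card_pos_iff.2 ⟨⟦a⟧⟩
  unfold relClasses
  rw [Nat.card_eq_fintype_card, Nat.card_eq_fintype_card, ← hsr, ← hss]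
  omega

lemma relClasses_pairRel_lt [Finite α] {r : α → α → Prop} {a b : α}
    (h : ¬ Relation.EqvGen r a b) :
    relClasses (pairRel r a b) + 1 ≤ relClasses r := by
  classical
  cases nonempty_fintype α
  set sr := Relation.EqvGen.setoid r with hsr
  set ss := Relation.EqvGen.setoid (pairRel r a b) with hss
  have hmono : ∀ x y : α, Relation.EqvGen r x y → Relation.EqvGen (pairRel r a b) x y :=
    fun x y h => h.mono (fun u v huv => Or.inl huv)
  let g : Quotient sr → Quotient ss := Quotient.map' id (fun x y hxy => hmono x y hxy)
  have hsurj : Function.Surjective g := by rintro ⟨x⟩; exact ⟨Quotient.mk'' x, rfl⟩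
  have hgab : g ⟦a⟧ = g ⟦b⟧ :=
    Quotient.sound' (Relation.EqvGen.rel _ _ (Or.inr (Or.inl ⟨rfl, rfl⟩)))
  have hab : (⟦a⟧ : Quotient sr) ≠ ⟦b⟧ := fun hh => h (Quotient.exact' hh)
  -- univ of Quotient ss is covered by image of erase
  have hcover : (Finset.univ : Finset (Quotient ss)) ⊆
      (Finset.univ.erase (⟦a⟧ : Quotient sr)).image g := by
    intro z _
    obtain ⟨u, rfl⟩ := hsurj z
    by_cases hu : u = ⟦a⟧
    · subst hu
      refine Finset.mem_image.2 ⟨⟦b⟧, ?_, hgab.symm⟩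
      exact Finset.mem_erase.2 ⟨hab.symm, Finset.mem_univ _⟩
    · exact Finset.mem_image.2 ⟨u, Finset.mem_erase.2 ⟨hu, Finset.mem_univ _⟩, rfl⟩
  have h2 := Finset.card_le_card hcover
  have h3 := Finset.card_image_le (s := Finset.univ.erase (⟦a⟧ : Quotient sr)) (f := g)
  have h4 := Finset.card_erase_of_mem (Finset.mem_univ (⟦a⟧ : Quotient sr))
  have h1 : 1 ≤ Fintype.card (Quotient sr) := Fintype.card_pos_iff.2 ⟨⟦a⟧⟩
  unfold relClasses
  rw [Nat.card_eq_fintype_card, Nat.card_eq_fintype_card, ← hsr, ← hss]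
  simp only [Finset.card_univ] at h2 h3 h4 ⊢
  omega

end Generic2

section Perm
variable {α : Type*}

private lemma et' {r : α → α → Prop} {p q z : α} (h1 : Relation.EqvGen r p q)
    (h2 : Relation.EqvGen r q z) : Relation.EqvGen r p z := h1.trans _ _ _ h2

lemma eqvGen_perm_iff {f : Equiv.Perm α} {x y : α} :
    Relation.EqvGen (fun u v => f u = v) x y ↔ ∃ k : ℕ, (f ^ k) x = y ∨ (f ^ k) y = x := by
  have reach : ∀ (k : ℕ) (z : α), Relation.EqvGen (fun u v => f u = v) z ((f ^ k) z) := by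
    intro k
    induction k with
    | zero => intro z; simpa using Relation.EqvGen.refl z
    | succ k ih =>
      intro z
      refine et' (ih z) (Relation.EqvGen.rel _ _ ?_)
      rw [pow_succ']
      rfl
  constructor
  · intro h
    induction h with
    | rel u v huv => exact ⟨1, Or.inl (by simpa using huv)⟩
    | refl u => exact ⟨0, Or.inl rfl⟩
    | symm u v _ ih => obtain ⟨k, hk⟩ := ih; exact ⟨k, hk.symm⟩
    | trans u v w _ _ ih1 ih2 =>
      obtain ⟨k, hk⟩ := ih1; obtain ⟨l, hl⟩ := ih2
      rcases hk with hk | hk <;> rcases hl with hl | hl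
      · exact ⟨l + k, Or.inl (by rw [pow_add, Equiv.Perm.mul_apply, hk, hl])⟩
      · rcases le_total k l with h' | h'
        · refine ⟨l - k, Or.inr ?_⟩
          refine (Equiv.injective (f ^ k)) ?_
          rw [← Equiv.Perm.mul_apply, ← pow_add, Nat.add_sub_cancel' h', hl, hk]
        · refine ⟨k - l, Or.inl ?_⟩
          refine (Equiv.injective (f ^ l)) ?_
          rw [← Equiv.Perm.mul_apply, ← pow_add, Nat.add_sub_cancel' h', hk, hl]
      · rcases le_total k l with h' | h'
        · refine ⟨l - k, Or.inl ?_⟩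
          rw [← hk, ← Equiv.Perm.mul_apply, ← pow_add, Nat.sub_add_cancel h', hl]
        · refine ⟨k - l, Or.inr ?_⟩
          rw [← hl, ← Equiv.Perm.mul_apply, ← pow_add, Nat.sub_add_cancel h', hk]
      · refine ⟨k + l, Or.inr ?_⟩
        rw [pow_add, Equiv.Perm.mul_apply, hl, hk]
  · rintro ⟨k, hk | hk⟩
    · exact hk ▸ reach k x
    · exact (hk ▸ reach k y).symm

lemma eqvGen_swap_mul [Finite α] [DecidableEq α] {f : Equiv.Perm α} {a b : α}
    (h : ¬ Relation.EqvGen (fun u v => f u = v) a b) :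
    Relation.EqvGen (fun u v => (Equiv.swap a b * f) u = v) a b := by
  classical
  cases nonempty_fintype α
  set g := Equiv.swap a b * f with hg
  have hfg : ∀ z, f z = Equiv.swap a b (g z) := by
    intro z
    rw [hg, Equiv.Perm.mul_apply, Equiv.swap_apply_self]
  have hex : ∃ n, 0 < n ∧ ((g ^ n) b = a ∨ (g ^ n) b = b) := by
    refine ⟨Fintype.card (Equiv.Perm α), Fintype.card_pos, Or.inr ?_⟩
    rw [pow_card_eq_one]
    rfl
  set k := Nat.find hex with hk
  obtain ⟨hkpos, hkspec⟩ := Nat.find_spec hex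
  have hmin : ∀ j, 0 < j → j < k → (g ^ j) b ≠ a ∧ (g ^ j) b ≠ b := by
    intro j hj hjk
    have := Nat.find_min hex hjk
    push_neg at this
    exact this hj
  have key : ∀ j, j < k → (f ^ j) b = (g ^ j) b := by
    intro j
    induction j with
    | zero => intro _; rfl
    | succ j ih =>
      intro hjk
      have h1 : (f ^ (j + 1)) b = f ((f ^ j) b) := by rw [pow_succ']; rfl
      have h2 : (g ^ (j + 1)) b = g ((g ^ j) b) := by rw [pow_succ']; rfl
      obtain ⟨hne1, hne2⟩ := hmin (j + 1) (Nat.succ_pos j) hjk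
      rw [h1, ih (by omega), hfg, ← h2, Equiv.swap_apply_of_ne_of_ne hne1 hne2]
  have hb : (f ^ k) b = a ∨ (g ^ k) b = a := by
    rcases hkspec with h1 | h1
    · exact Or.inr h1
    · left
      have hx : (f ^ k) b = f ((f ^ (k - 1)) b) := by
        conv_lhs => rw [show k = (k - 1) + 1 by omega]
        rw [pow_succ']; rfl
      have hy : (g ^ k) b = g ((g ^ (k - 1)) b) := by
        conv_lhs => rw [show k = (k - 1) + 1 by omega]
        rw [pow_succ']; rfl
      rw [hx, key (k - 1) (by omega), hfg, ← hy, h1, Equiv.swap_apply_right]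
  rcases hb with h1 | h1
  · exact absurd (eqvGen_perm_iff.2 ⟨k, Or.inr h1⟩) h
  · exact eqvGen_perm_iff.2 ⟨k, Or.inr h1⟩

lemma orbitCount_swap_mul_le [Finite α] [DecidableEq α] (f : Equiv.Perm α) (a b : α) :
    orbitCount ⇑(Equiv.swap a b * f) ≤ orbitCount ⇑f + 1 := by
  classical
  set g := Equiv.swap a b * f with hg
  have himp : ∀ x y : α, f x = y → Relation.EqvGen (pairRel (fun u v => g u = v) a b) x y := by
    rintro x _ rfl
    have hx : Relation.EqvGen (pairRel (fun u v => g u = v) a b) x (g x) :=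
      Relation.EqvGen.rel _ _ (Or.inl rfl)
    have hab : Relation.EqvGen (pairRel (fun u v => g u = v) a b) a b :=
      Relation.EqvGen.rel _ _ (Or.inr (Or.inl ⟨rfl, rfl⟩))
    have hfx : f x = Equiv.swap a b (g x) := by
      rw [hg, Equiv.Perm.mul_apply, Equiv.swap_apply_self]
    by_cases h1 : g x = a
    · rw [hfx, h1, Equiv.swap_apply_left]
      exact et' hx (by rw [h1]; exact hab)
    · by_cases h2 : g x = b
      · rw [hfx, h2, Equiv.swap_apply_right]
        exact et' hx (by rw [h2]; exact hab.symm)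
      · rw [hfx, Equiv.swap_apply_of_ne_of_ne h1 h2]
        exact hx
  have h1 : relClasses (pairRel (fun u v => g u = v) a b) ≤ relClasses (fun x y => f x = y) :=
    relClasses_le_of_imp himp
  have h2 := relClasses_le_pairRel_add_one (fun u v => g u = v) a b
  unfold orbitCount
  omega

lemma orbitCount_le_swap_mul [Finite α] [DecidableEq α] (f : Equiv.Perm α) (a b : α) :
    orbitCount ⇑f ≤ orbitCount ⇑(Equiv.swap a b * f) + 1 := by
  have := orbitCount_swap_mul_le (Equiv.swap a b * f) a b
  rwa [← mul_assoc, Equiv.swap_mul_self, one_mul] at this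

lemma orbitCount_swap_mul_lt [Finite α] [DecidableEq α] {f : Equiv.Perm α} {a b : α}
    (h : ¬ Relation.EqvGen (fun u v => f u = v) a b) :
    orbitCount ⇑(Equiv.swap a b * f) + 1 ≤ orbitCount ⇑f := by
  classical
  set g := Equiv.swap a b * f with hg
  have hab : Relation.EqvGen (fun u v => g u = v) a b := eqvGen_swap_mul h
  have himp : ∀ x y : α, pairRel (fun u v => f u = v) a b x y →
      Relation.EqvGen (fun u v => g u = v) x y := by
    rintro x y (rfl | ⟨rfl, rfl⟩ | ⟨rfl, rfl⟩)
    case inl =>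
      have hx : Relation.EqvGen (fun u v => g u = v) x (g x) := Relation.EqvGen.rel _ _ rfl
      have hfx : f x = Equiv.swap a b (g x) := by
        rw [hg, Equiv.Perm.mul_apply, Equiv.swap_apply_self]
      by_cases h1 : g x = a
      · rw [hfx, h1, Equiv.swap_apply_left]
        exact et' hx (by rw [h1]; exact hab)
      · by_cases h2 : g x = b
        · rw [hfx, h2, Equiv.swap_apply_right]
          exact et' hx (by rw [h2]; exact hab.symm)
        · rw [hfx, Equiv.swap_apply_of_ne_of_ne h1 h2]
          exact hx
    case inr.inl => exact hab
    case inr.inr => exact hab.symm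
  have h1 : relClasses (fun u v => g u = v) ≤ relClasses (pairRel (fun u v => f u = v) a b) :=
    relClasses_le_of_imp himp
  have h2 := relClasses_pairRel_lt h
  unfold orbitCount
  omega

/-- product of a list of swaps -/
def prodSwaps [DecidableEq α] (L : List (α × α)) : Equiv.Perm α :=
  (L.map fun p => Equiv.swap p.1 p.2).prod

lemma orbitCount_prodSwaps_mul_le [Finite α] [DecidableEq α] (L : List (α × α)) (f : Equiv.Perm α) :
    orbitCount ⇑(prodSwaps L * f) ≤ orbitCount ⇑f + L.length := by
  induction L generalizing f with
  | nil => simpa [prodSwaps] using le_refl _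
  | cons p L ih =>
    have hsplit : prodSwaps (p :: L) * f = Equiv.swap p.1 p.2 * (prodSwaps L * f) := by
      simp [prodSwaps, List.prod_cons, mul_assoc]
    rw [hsplit]
    have h1 := orbitCount_swap_mul_le (prodSwaps L * f) p.1 p.2
    have h2 := ih f
    simp only [List.length_cons]
    omega

lemma eqvGen_invariant {γ : Type*} {f : α → α} {F : α → γ} (hF : ∀ x, F (f x) = F x)
    {x y : α} (h : Relation.EqvGen (fun u v => f u = v) x y) : F x = F y := by
  induction h with
  | rel u v huv => rw [← huv, hF]
  | refl u => rfl
  | symm _ _ _ ih => exact ih.symm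
  | trans _ _ _ _ _ ih1 ih2 => exact ih1.trans ih2

lemma card_le_orbitCount [Finite α] {γ : Type*} {f : α → α} {F : α → γ}
    (hF : ∀ x, F (f x) = F x) (s : Finset α)
    (hinj : ∀ x ∈ s, ∀ y ∈ s, F x = F y → x = y) : s.card ≤ orbitCount f := by
  classical
  cases nonempty_fintype α
  unfold orbitCount relClasses
  rw [Nat.card_eq_fintype_card, ← Finset.card_univ]
  refine Finset.card_le_card_of_injOn
    (fun x => (Quotient.mk'' x : Quotient (Relation.EqvGen.setoid (fun x y => f x = y))))
    (fun x _ => Finset.mem_univ _) ?_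
  intro x hx y hy hxy
  exact hinj x (Finset.mem_coe.1 hx) y (Finset.mem_coe.1 hy)
    (eqvGen_invariant hF (Quotient.exact' hxy))

lemma orbitCount_le_card [Finite α] {f : α → α} (s : Finset α)
    (hreach : ∀ x, ∃ y ∈ s, Relation.EqvGen (fun u v => f u = v) y x) :
    orbitCount f ≤ s.card := by
  classical
  cases nonempty_fintype α
  unfold orbitCount relClasses
  rw [Nat.card_eq_fintype_card, ← Finset.card_univ]
  refine Finset.card_le_card_of_surjOn
    (fun x => (Quotient.mk'' x : Quotient (Relation.EqvGen.setoid (fun x y => f x = y)))) ?_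
  rintro z _
  obtain ⟨x, hx⟩ := Quotient.exists_rep z
  obtain ⟨y, hy, hrel⟩ := hreach x
  exact ⟨y, Finset.mem_coe.2 hy, by rw [← hx]; exact Quotient.sound' hrel⟩

lemma orbitCount_conj {β : Type*} (e : α ≃ β) (f : α → α) :
    orbitCount (⇑e ∘ f ∘ ⇑e.symm) = orbitCount f := by
  unfold orbitCount relClasses
  refine Nat.card_congr (Quotient.congr e.symm ?_)
  intro u v
  show Relation.EqvGen (fun x y => (⇑e ∘ f ∘ ⇑e.symm) x = y) u v ↔
    Relation.EqvGen (fun x y => f x = y) (e.symm u) (e.symm v)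
  constructor
  · intro h
    induction h with
    | rel x y hxy =>
      refine Relation.EqvGen.rel _ _ ?_
      simp only [Function.comp_apply] at hxy
      have := congrArg e.symm hxy
      rwa [Equiv.symm_apply_apply] at this
    | refl x => exact Relation.EqvGen.refl _
    | symm _ _ _ ih => exact ih.symm
    | trans _ _ _ _ _ ih1 ih2 => exact et' ih1 ih2
  · intro h
    have gen : ∀ p q : α, Relation.EqvGen (fun x y => f x = y) p q →
        Relation.EqvGen (fun x y => (⇑e ∘ f ∘ ⇑e.symm) x = y) (e p) (e q) := by
      intro p q hpq
      induction hpq with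
      | rel x y hxy =>
        refine Relation.EqvGen.rel _ _ ?_
        simp only [Function.comp_apply, Equiv.symm_apply_apply]
        rw [hxy]
      | refl x => exact Relation.EqvGen.refl _
      | symm _ _ _ ih => exact ih.symm
      | trans _ _ _ _ _ ih1 ih2 => exact et' ih1 ih2
    have := gen _ _ h
    rwa [Equiv.apply_symm_apply, Equiv.apply_symm_apply] at this

end Perm

section Invol
variable {α : Type*} [DecidableEq α]

def flatPairs (L : List (α × α)) : List α := L.flatMap fun p => [p.1, p.2]

lemma mem_flatPairs {L : List (α × α)} {z : α} :
    z ∈ flatPairs L ↔ ∃ q ∈ L, z = q.1 ∨ z = q.2 := by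
  simp [flatPairs]

lemma flatPairs_cons (p : α × α) (L : List (α × α)) :
    flatPairs (p :: L) = p.1 :: p.2 :: flatPairs L := rfl

lemma flatPairs_append (L M : List (α × α)) :
    flatPairs (L ++ M) = flatPairs L ++ flatPairs M := by
  simp [flatPairs]

lemma flatPairs_length (L : List (α × α)) : (flatPairs L).length = 2 * L.length := by
  induction L with
  | nil => rfl
  | cons p L ih => rw [flatPairs_cons]; simp only [List.length_cons, ih]; ring

lemma exists_swap_list (ι : α → α) (hinv : ∀ x, ι (ι x) = x) :
    ∀ (N : ℕ) (T : Finset α), T.card ≤ N → (∀ x ∈ T, ι x ∈ T) → (∀ x ∈ T, ι x ≠ x) →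
    ∃ L : List (α × α), (∀ p ∈ L, ι p.1 = p.2) ∧ (flatPairs L).Nodup ∧
      (∀ x, x ∈ flatPairs L ↔ x ∈ T) := by
  intro N
  induction N with
  | zero =>
    intro T hT _ _
    have hemp : T = ∅ := Finset.card_eq_zero.1 (Nat.le_zero.1 hT)
    subst hemp
    exact ⟨[], by simp, by simp [flatPairs], by simp [flatPairs]⟩
  | succ N ih =>
    intro T hT hTinv hTfpf
    by_cases hemp : T = ∅
    · subst hemp
      exact ⟨[], by simp, by simp [flatPairs], by simp [flatPairs]⟩
    · obtain ⟨a, ha⟩ := Finset.nonempty_iff_ne_empty.2 hemp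
      have hia : ι a ∈ T := hTinv a ha
      have hia' : ι a ≠ a := hTfpf a ha
      set T' := (T.erase a).erase (ι a) with hT'
      have hmem' : ∀ x, x ∈ T' ↔ (x ∈ T ∧ x ≠ a ∧ x ≠ ι a) := by
        intro x
        simp only [hT', Finset.mem_erase]
        tauto
      have h4 : (T.erase a).card = T.card - 1 := Finset.card_erase_of_mem ha
      have h5 : T'.card = (T.erase a).card - 1 :=
        Finset.card_erase_of_mem (Finset.mem_erase.2 ⟨hia', hia⟩)
      have h6 : 1 ≤ (T.erase a).card := Finset.card_pos.2 ⟨ι a, Finset.mem_erase.2 ⟨hia', hia⟩⟩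
      have h7 : 1 ≤ T.card := Finset.card_pos.2 ⟨a, ha⟩
      have hcard : T'.card + 2 = T.card := by omega
      have hT'inv : ∀ x ∈ T', ι x ∈ T' := by
        intro x hx
        rw [hmem'] at hx ⊢
        obtain ⟨hx1, hx2, hx3⟩ := hx
        refine ⟨hTinv x hx1, ?_, ?_⟩
        · intro hh; exact hx3 (by rw [← hh, hinv])
        · intro hh; exact hx2 (by have := congrArg ι hh; rwa [hinv, hinv] at this)
      have hT'fpf : ∀ x ∈ T', ι x ≠ x := fun x hx => hTfpf x ((hmem' x).1 hx).1
      obtain ⟨L, hL1, hL2, hL3⟩ := ih T' (by omega) hT'inv hT'fpf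
      have hanotin : a ∉ flatPairs L := by rw [hL3, hmem']; tauto
      have hianotin : ι a ∉ flatPairs L := by rw [hL3, hmem']; tauto
      refine ⟨(a, ι a) :: L, ?_, ?_, ?_⟩
      · intro p hp
        rcases List.mem_cons.1 hp with rfl | hp'
        · rfl
        · exact hL1 p hp'
      · rw [flatPairs_cons]
        refine List.nodup_cons.2 ⟨?_, List.nodup_cons.2 ⟨hianotin, hL2⟩⟩
        simp only [List.mem_cons]
        rintro (h | h)
        · exact hia' h.symm
        · exact hanotin h
      · intro x
        rw [flatPairs_cons]
        simp only [List.mem_cons, hL3, hmem']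
        constructor
        · rintro (rfl | rfl | ⟨h, _, _⟩)
          · exact ha
          · exact hia
          · exact h
        · intro hx
          by_cases h1 : x = a
          · exact Or.inl h1
          · by_cases h2 : x = ι a
            · exact Or.inr (Or.inl h2)
            · exact Or.inr (Or.inr ⟨hx, h1, h2⟩)

lemma prodSwaps_eq_invol (ι : α → α) (hinv : ∀ x, ι (ι x) = x)
    (L : List (α × α)) (hp : ∀ p ∈ L, ι p.1 = p.2) (hnd : (flatPairs L).Nodup) :
    ∀ z, prodSwaps L z = if z ∈ flatPairs L then ι z else z := by
  induction L with
  | nil => intro z; simp [prodSwaps, flatPairs]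
  | cons p L ih =>
    intro z
    have hpL : ∀ q ∈ L, ι q.1 = q.2 := fun q hq => hp q (List.mem_cons_of_mem _ hq)
    have hhead : ι p.1 = p.2 := hp p (List.mem_cons_self)
    have hnd' : (flatPairs (p :: L)).Nodup := hnd
    rw [flatPairs_cons] at hnd'
    have h1 : p.1 ∉ p.2 :: flatPairs L := (List.nodup_cons.1 hnd').1
    have hndL' := (List.nodup_cons.1 hnd').2
    have h2 : p.2 ∉ flatPairs L := (List.nodup_cons.1 hndL').1
    have hndL : (flatPairs L).Nodup := (List.nodup_cons.1 hndL').2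
    have h1a : p.1 ≠ p.2 := by intro hh; exact (List.nodup_cons.1 hnd').1 (hh ▸ List.mem_cons_self)
    have h1b : p.1 ∉ flatPairs L := fun hh => h1 (List.mem_cons_of_mem _ hh)
    have hclosed : ∀ w, w ∈ flatPairs L → ι w ∈ flatPairs L := by
      intro w hw
      obtain ⟨q, hq, hq'⟩ := mem_flatPairs.1 hw
      rcases hq' with rfl | rfl
      · rw [hpL q hq]; exact mem_flatPairs.2 ⟨q, hq, Or.inr rfl⟩
      · rw [show ι q.2 = q.1 by rw [← hpL q hq, hinv]]
        exact mem_flatPairs.2 ⟨q, hq, Or.inl rfl⟩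
    have hps : prodSwaps (p :: L) z = Equiv.swap p.1 p.2 (prodSwaps L z) := by
      simp [prodSwaps, List.prod_cons]
    rw [hps, ih hpL hndL z, flatPairs_cons]
    by_cases hz1 : z = p.1
    · subst hz1
      rw [if_neg h1b, if_pos (List.mem_cons_self), Equiv.swap_apply_left, hhead]
    · by_cases hz2 : z = p.2
      · subst hz2
        rw [if_neg h2, if_pos (List.mem_cons_of_mem _ (List.mem_cons_self)),
          Equiv.swap_apply_right, ← hhead, hinv]
      · by_cases hzL : z ∈ flatPairs L
        · rw [if_pos hzL]
          have hi1 : ι z ≠ p.1 := by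
            intro hh; exact h1b (hh ▸ hclosed z hzL)
          have hi2 : ι z ≠ p.2 := by
            intro hh; exact h2 (hh ▸ hclosed z hzL)
          rw [Equiv.swap_apply_of_ne_of_ne hi1 hi2,
            if_pos (List.mem_cons_of_mem _ (List.mem_cons_of_mem _ hzL))]
        · rw [if_neg hzL, Equiv.swap_apply_of_ne_of_ne hz1 hz2]
          have : ¬ (z = p.1 ∨ z = p.2 ∨ z ∈ flatPairs L) := by tauto
          rw [if_neg (by simpa [List.mem_cons] using this)]

end Invol


section ZModHelp
variable {M : ℕ} [NeZero M]

lemma val_add_one_cases (hM : 1 < M) (i : ZMod M) :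
    (i.val + 1 = M ∧ (i + 1).val = 0) ∨ (i.val + 1 < M ∧ (i + 1).val = i.val + 1) := by
  haveI : Fact (1 < M) := ⟨hM⟩
  have h1 : (1 : ZMod M).val = 1 := ZMod.val_one M
  have h2 : (i + 1).val = (i.val + 1) % M := by rw [ZMod.val_add, h1]
  have h3 := ZMod.val_lt i
  rcases Nat.lt_or_ge (i.val + 1) M with h | h
  · right; exact ⟨h, by rw [h2, Nat.mod_eq_of_lt h]⟩
  · left
    have h4 : i.val + 1 = M := by omega
    exact ⟨h4, by rw [h2, h4, Nat.mod_self]⟩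

lemma val_sub_one_cases (hM : 1 < M) (i : ZMod M) :
    (i.val = 0 ∧ (i - 1).val = M - 1) ∨ (0 < i.val ∧ (i - 1).val = i.val - 1) := by
  have := val_add_one_cases hM (i - 1)
  rw [sub_add_cancel] at this
  rcases this with ⟨h1, h2⟩ | ⟨h1, h2⟩
  · exact Or.inl ⟨h2, by omega⟩
  · exact Or.inr ⟨by omega, by omega⟩

lemma val_neg_one' (hM : 1 < M) : (-1 : ZMod M).val = M - 1 := by
  have := val_sub_one_cases hM 0
  rw [zero_sub, ZMod.val_zero] at this
  rcases this with ⟨_, h⟩ | ⟨h, _⟩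
  · exact h
  · omega

end ZModHelp

section Core
variable {m : ℕ}

def bRho (m : ℕ) : Equiv.Perm (ZMod (2*m) × Bool) where
  toFun p := (if p.2 then p.1 - 1 else p.1 + 1, p.2)
  invFun p := (if p.2 then p.1 + 1 else p.1 - 1, p.2)
  left_inv := by rintro ⟨i, _ | _⟩ <;> simp
  right_inv := by rintro ⟨i, _ | _⟩ <;> simp

def bIot (B : Bouquet m) : Equiv.Perm (ZMod (2*m) × Bool) where
  toFun p := (B.σ p.1, xor p.2 (B.t p.1))
  invFun p := (B.σ p.1, xor p.2 (B.t p.1))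
  left_inv := by
    rintro ⟨i, s⟩
    simp only [B.invol, B.t_inv]
    rw [Bool.xor_assoc]
    simp
  right_inv := by
    rintro ⟨i, s⟩
    simp only [B.invol, B.t_inv]
    rw [Bool.xor_assoc]
    simp

def bPhiE (m : ℕ) : Equiv.Perm (ZMod (2*m) × Bool) where
  toFun p := (if p.2 then p.1 + 1 else p.1, p.2)
  invFun p := (if p.2 then p.1 - 1 else p.1, p.2)
  left_inv := by rintro ⟨i, _ | _⟩ <;> simp
  right_inv := by rintro ⟨i, _ | _⟩ <;> simp

lemma phi_factor (B : Bouquet m) :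
    Phi B = ⇑((bPhiE m).symm) ∘ (⇑(bIot B * bRho m)) ∘ ⇑(bPhiE m) := by
  funext p
  rcases p with ⟨i, _ | _⟩
  · show Phi B (i, false) = (bPhiE m).symm ((bIot B) ((bRho m) ((bPhiE m) (i, false))))
    cases ht : B.t (i + 1) <;>
      simp [Phi, bPhiE, bRho, bIot, Equiv.symm, ht]
  · show Phi B (i, true) = (bPhiE m).symm ((bIot B) ((bRho m) ((bPhiE m) (i, true))))
    cases ht : B.t i <;>
      simp [Phi, bPhiE, bRho, bIot, Equiv.symm, ht, add_sub_cancel_right]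

lemma orbitCount_phi_eq (B : Bouquet m) :
    orbitCount (Phi B) = orbitCount ⇑(bIot B * bRho m) := by
  rw [phi_factor]
  rw [show ⇑(bPhiE m) = ⇑((bPhiE m).symm.symm) by simp]
  exact orbitCount_conj (bPhiE m).symm _

end Core


section Lower
variable {m : ℕ}

def rset (B : Bouquet m) [NeZero (2*m)] (i : ZMod (2*m)) : Finset (ZMod (2*m)) :=
  Finset.univ.filter
    (fun a => min a.val (B.σ a).val ≤ i.val ∧ i.val < max a.val (B.σ a).val)

lemma rset_inv (hm : m ≠ 0) (B : Bouquet m) (hnc : ∀ i j, ¬ Interlace B i j) :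
    haveI : NeZero (2*m) := ⟨by omega⟩
    ∀ i : ZMod (2*m), rset B (B.σ (i+1)) = rset B i := by
  haveI : NeZero (2*m) := ⟨by omega⟩
  intro i
  have hM : 1 < 2*m := by omega
  set j := i + 1 with hj
  set s := B.σ j with hs
  by_cases hsi : s = i
  · rw [hsi]
  ext a
  simp only [rset, Finset.mem_filter, Finset.mem_univ, true_and]
  have hvinj : ∀ x y : ZMod (2*m), x.val = y.val → x = y :=
    fun x y h => ZMod.val_injective (2*m) h
  have hsj : s ≠ j := hs ▸ B.fpf j
  have hSJ : s.val ≠ j.val := fun h => hsj (hvinj _ _ h)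
  have hSI : s.val ≠ i.val := fun h => hsi (hvinj _ _ h)
  have hJ := val_add_one_cases hM i
  rw [← hj] at hJ
  have hba : ∀ x : ZMod (2*m), x.val < 2*m := ZMod.val_lt
  have hbi := hba i; have hbj := hba j; have hbs := hba s; have hbA := hba a
  have hbA' := hba (B.σ a)
  by_cases haj : a = j
  · subst haj
    rw [← hs]
    omega
  by_cases has : a = s
  · subst has
    have hss : B.σ s = j := by rw [hs, B.invol]
    rw [hss]
    omega
  -- a not on the chord of j
  have h1 : B.σ a ≠ s := fun h => haj (by rw [← B.invol a, h, hs, B.invol])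
  have h2 : B.σ a ≠ j := fun h => has (by rw [← B.invol a, h, ← hs])
  have hAJ : a.val ≠ j.val := fun h => haj (hvinj _ _ h)
  have hAS : a.val ≠ s.val := fun h => has (hvinj _ _ h)
  have hA'J : (B.σ a).val ≠ j.val := fun h => h2 (hvinj _ _ h)
  have hA'S : (B.σ a).val ≠ s.val := fun h => h1 (hvinj _ _ h)
  have hP := hnc j a
  rw [Interlace] at hP
  rw [← hs] at hP
  have hPQ : (min j.val s.val < a.val ∧ a.val < max j.val s.val) ↔
      (min j.val s.val < (B.σ a).val ∧ (B.σ a).val < max j.val s.val) := by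
    unfold Xor' Xor at hP
    tauto
  omega

lemma rset_inv2 (hm : m ≠ 0) (B : Bouquet m) (hnc : ∀ i j, ¬ Interlace B i j) :
    haveI : NeZero (2*m) := ⟨by omega⟩
    ∀ i : ZMod (2*m), rset B (B.σ i - 1) = rset B i := by
  haveI : NeZero (2*m) := ⟨by omega⟩
  intro i
  have := rset_inv hm B hnc (B.σ i - 1)
  rw [sub_add_cancel, B.invol] at this
  exact this.symm

lemma orbit_lower (hm : m ≠ 0) (B : Bouquet m) (ht : ∀ i, B.t i = false)
    (hnc : ∀ i j, ¬ Interlace B i j) : 2*m + 2 ≤ orbitCount (Phi B) := by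
  haveI : NeZero (2*m) := ⟨by omega⟩
  have hM : 1 < 2*m := by omega
  have hrinv := rset_inv hm B hnc
  have hrinv2 := rset_inv2 hm B hnc
  have hvinj : ∀ x y : ZMod (2*m), x.val = y.val → x = y :=
    fun x y h => ZMod.val_injective (2*m) h
  set F : ZMod (2*m) × Bool → Bool × Finset (ZMod (2*m)) :=
    fun p => (p.2, rset B p.1) with hFdef
  have hFinv : ∀ p, F (Phi B p) = F p := by
    rintro ⟨i, _ | _⟩
    · have h1 : Phi B (i, false) = (B.σ (i+1), false) := by simp [Phi, ht]
      rw [h1]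
      simp only [hFdef, hrinv]
    · have h1 : Phi B (i, true) = (B.σ i - 1, true) := by simp [Phi, ht]
      rw [h1]
      simp only [hFdef, hrinv2]
  set A : Finset (ZMod (2*m)) := Finset.univ.filter (fun a => a.val < (B.σ a).val) with hA
  have hvne : ∀ a : ZMod (2*m), a.val ≠ (B.σ a).val :=
    fun a h => B.fpf a (hvinj _ _ h.symm)
  have hAcard : A.card = m := by
    have hbij : A.card = (Finset.univ.filter (fun a : ZMod (2*m) =>
        ¬ a.val < (B.σ a).val)).card := by
      refine Finset.card_bij (fun a _ => B.σ a) ?_ ?_ ?_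
      · intro a ha
        simp only [hA, Finset.mem_filter, Finset.mem_univ, true_and] at ha ⊢
        rw [B.invol]
        omega
      · intro a ha b hb h
        have := congrArg B.σ h
        rwa [B.invol, B.invol] at this
      · intro b hb
        simp only [Finset.mem_filter, Finset.mem_univ, true_and] at hb
        refine ⟨B.σ b, ?_, B.invol b⟩
        simp only [hA, Finset.mem_filter, Finset.mem_univ, true_and, B.invol]
        have := hvne b
        omega
    have hsum := Finset.card_filter_add_card_filter_not
      (s := (Finset.univ : Finset (ZMod (2*m)))) (p := fun a => a.val < (B.σ a).val)
    rw [Finset.card_univ, ZMod.card] at hsum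
    rw [← hA] at hsum
    omega
  have hneg1 : (-1 : ZMod (2*m)).val = 2*m - 1 := val_neg_one' hM
  have hm1 : (-1 : ZMod (2*m)) ∉ A := by
    simp only [hA, Finset.mem_filter, Finset.mem_univ, true_and]
    have := ZMod.val_lt (B.σ (-1 : ZMod (2*m)))
    have := hvne (-1 : ZMod (2*m))
    omega
  have hrm1 : rset B (-1) = ∅ := by
    ext a
    simp only [rset, Finset.mem_filter, Finset.mem_univ, true_and, Finset.notMem_empty,
      iff_false]
    have := ZMod.val_lt a
    have := ZMod.val_lt (B.σ a)
    omega
  have hself : ∀ a ∈ A, a ∈ rset B a := by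
    intro a ha
    simp only [hA, Finset.mem_filter, Finset.mem_univ, true_and] at ha
    simp only [rset, Finset.mem_filter, Finset.mem_univ, true_and]
    omega
  have hprod : ((insert (-1 : ZMod (2*m)) A) ×ˢ (Finset.univ : Finset Bool)).card
      = 2*m + 2 := by
    rw [Finset.card_product, Finset.card_insert_of_notMem hm1, hAcard]
    simp only [Finset.card_univ, Fintype.card_bool]
    ring
  rw [← hprod]
  refine card_le_orbitCount hFinv _ ?_
  rintro ⟨x, sx⟩ hx ⟨y, sy⟩ hy hF
  simp only [Finset.mem_product, Finset.mem_insert] at hx hy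
  simp only [hFdef, Prod.mk.injEq] at hF
  obtain ⟨hF1, hF2⟩ := hF
  have hxy : x = y := by
    rcases hx.1 with rfl | hxA <;> rcases hy.1 with rfl | hyA
    · rfl
    · exfalso
      have := hself y hyA
      rw [← hF2, hrm1] at this
      exact Finset.notMem_empty _ this
    · exfalso
      have := hself x hxA
      rw [hF2, hrm1] at this
      exact Finset.notMem_empty _ this
    · have hx' := hself x hxA
      have hy' := hself y hyA
      rw [hF2] at hx'
      rw [← hF2] at hy'
      simp only [rset, Finset.mem_filter, Finset.mem_univ, true_and] at hx' hy'
      simp only [hA, Finset.mem_filter, Finset.mem_univ, true_and] at hxA hyA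
      refine hvinj _ _ ?_
      omega
  rw [hxy, hF1]

end Lower


section Upper
variable {m : ℕ}

lemma prodSwaps_append {α : Type*} [DecidableEq α] (L M : List (α × α)) :
    prodSwaps (L ++ M) = prodSwaps L * prodSwaps M := by
  simp [prodSwaps, List.prod_append]

lemma bIot_invol (B : Bouquet m) : ∀ z, (bIot B) ((bIot B) z) = z := by
  rintro ⟨i, s⟩
  show ((B.σ (B.σ i)), xor (xor s (B.t i)) (B.t (B.σ i))) = (i, s)
  rw [B.invol, B.t_inv, Bool.xor_assoc]
  simp

lemma bIot_fpf (B : Bouquet m) : ∀ z, (bIot B) z ≠ z := by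
  rintro ⟨i, s⟩ h
  exact B.fpf i (congrArg Prod.fst h)

lemma rho_snd (z : ZMod (2*m) × Bool) : ((bRho m) z).2 = z.2 := rfl

lemma rho_orbit_le (hm : m ≠ 0) : orbitCount ⇑(bRho m) ≤ 2 := by
  haveI : NeZero (2*m) := ⟨by omega⟩
  have hreachF : ∀ k : ℕ, Relation.EqvGen (fun u v => (bRho m) u = v)
      ((0 : ZMod (2*m)), false) (((k : ℕ) : ZMod (2*m)), false) := by
    intro k
    induction k with
    | zero => simp only [Nat.cast_zero]; exact Relation.EqvGen.refl _
    | succ k ih =>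
      refine et' ih (Relation.EqvGen.rel _ _ ?_)
      show (((k : ℕ) : ZMod (2*m)) + 1, false) = (((k+1 : ℕ) : ZMod (2*m)), false)
      push_cast
      rfl
  have hreachT : ∀ k : ℕ, Relation.EqvGen (fun u v => (bRho m) u = v)
      (((k : ℕ) : ZMod (2*m)), true) ((0 : ZMod (2*m)), true) := by
    intro k
    induction k with
    | zero => simp only [Nat.cast_zero]; exact Relation.EqvGen.refl _
    | succ k ih =>
      refine et' (Relation.EqvGen.rel _ _ ?_) ih
      show (((k+1 : ℕ) : ZMod (2*m)) - 1, true) = (((k : ℕ) : ZMod (2*m)), true)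
      push_cast
      simp
  have hsurj : ∀ x : ZMod (2*m) × Bool, ∃ y ∈ ({((0 : ZMod (2*m)), false),
      ((0 : ZMod (2*m)), true)} : Finset (ZMod (2*m) × Bool)),
      Relation.EqvGen (fun u v => (bRho m) u = v) y x := by
    rintro ⟨i, _ | _⟩
    · refine ⟨((0 : ZMod (2*m)), false), by simp, ?_⟩
      have := hreachF i.val
      rwa [ZMod.natCast_rightInverse i] at this
    · refine ⟨((0 : ZMod (2*m)), true), by simp, ?_⟩
      have := (hreachT i.val).symm
      rwa [ZMod.natCast_rightInverse i] at this
  have h2 := orbitCount_le_card _ hsurj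
  refine le_trans h2 ?_
  exact Finset.card_insert_le _ _ |>.trans (by simp)

lemma orbit_upper_twisted (hm : m ≠ 0) (B : Bouquet m) {a : ZMod (2*m)}
    (ht : B.t a = true) : orbitCount (Phi B) ≤ 2*m := by
  haveI : NeZero (2*m) := ⟨by omega⟩
  set b := B.σ a with hb
  have hab : a ≠ b := fun h => B.fpf a (h ▸ hb.symm)
  set P4 : Finset (ZMod (2*m) × Bool) := {(a,false),(a,true),(b,false),(b,true)} with hP4
  have hP4mem : ∀ z : ZMod (2*m) × Bool, z ∈ P4 ↔ z.1 = a ∨ z.1 = b := by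
    rintro ⟨i, s⟩
    simp only [hP4, Finset.mem_insert, Finset.mem_singleton, Prod.mk.injEq]
    cases s <;> simp
  set T := Finset.univ \ P4 with hT
  have hTmem : ∀ z : ZMod (2*m) × Bool, z ∈ T ↔ ¬ (z.1 = a ∨ z.1 = b) := by
    intro z
    rw [hT, Finset.mem_sdiff, hP4mem]
    simp
  have hTinv : ∀ z ∈ T, (bIot B) z ∈ T := by
    rintro ⟨i, s⟩ hz
    rw [hTmem] at hz ⊢
    push_neg at hz ⊢
    refine ⟨?_, ?_⟩
    · intro h
      have h' : B.σ i = a := h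
      exact hz.2 (by rw [← B.invol i, h', ← hb])
    · intro h
      have h' : B.σ i = b := h
      exact hz.1 (by rw [← B.invol i, h', hb, B.invol])
  obtain ⟨L0, hL1, hL2, hL3⟩ := exists_swap_list (⇑(bIot B)) (bIot_invol B) T.card T le_rfl
    hTinv (fun z _ => bIot_fpf B z)
  set p1 : (ZMod (2*m) × Bool) × (ZMod (2*m) × Bool) := ((a,true),(b,false)) with hp1
  set p2 : (ZMod (2*m) × Bool) × (ZMod (2*m) × Bool) := ((a,false),(b,true)) with hp2
  set L := L0 ++ [p1, p2] with hL
  have hL1' : ∀ p ∈ L, (bIot B) p.1 = p.2 := by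
    intro p hp
    rw [hL, List.mem_append] at hp
    rcases hp with hp | hp
    · exact hL1 p hp
    · simp only [List.mem_cons, List.mem_singleton] at hp
      rcases hp with rfl | rfl | h
      · show (B.σ a, xor true (B.t a)) = (b, false)
        rw [ht, ← hb]
        rfl
      · show (B.σ a, xor false (B.t a)) = (b, true)
        rw [ht, ← hb]
        rfl
      · exact absurd h (by simp)
  have hflat : flatPairs L = flatPairs L0 ++ [(a,true),(b,false),(a,false),(b,true)] := by
    rw [hL, flatPairs_append]
    rfl
  have h4P : ∀ w : ZMod (2*m) × Bool,
      w ∈ ([(a,true),(b,false),(a,false),(b,true)] : List (ZMod (2*m) × Bool)) ↔ w ∈ P4 := by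
    intro w
    rw [hP4mem]
    rcases w with ⟨i, s⟩
    simp only [List.mem_cons, List.mem_singleton, Prod.mk.injEq]
    cases s <;> simp <;> try tauto
  have hnd : (flatPairs L).Nodup := by
    rw [hflat]
    refine List.Nodup.append hL2 ?_ ?_
    · have : a ≠ b := hab
      simp [List.nodup_cons, this, Ne.symm this]
    · intro w hw hw2
      have h1 : w ∈ T := (hL3 w).1 hw
      have h2 : w ∈ P4 := (h4P w).1 hw2
      rw [hTmem] at h1
      rw [hP4mem] at h2
      exact h1 h2
  have hall : ∀ z : ZMod (2*m) × Bool, z ∈ flatPairs L := by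
    intro z
    rw [hflat, List.mem_append, h4P, hL3, hTmem, hP4mem]
    tauto
  have hps : bIot B = prodSwaps L := by
    refine Equiv.ext fun z => ?_
    rw [prodSwaps_eq_invol (⇑(bIot B)) (bIot_invol B) L hL1' hnd z, if_pos (hall z)]
  -- length of L
  have hlen : 2 * L.length = 4 * m := by
    have h1 := flatPairs_length L
    have h2 : (flatPairs L).toFinset.card = (flatPairs L).length :=
      List.toFinset_card_of_nodup hnd
    have h3 : (flatPairs L).toFinset = Finset.univ := by
      ext z; simp [hall z]
    rw [h3] at h2
    have h4 : (Finset.univ : Finset (ZMod (2*m) × Bool)).card = 4 * m := by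
      rw [Finset.card_univ, Fintype.card_prod, ZMod.card, Fintype.card_bool]
      ring
    omega
  -- split off p2
  have hsplit : bIot B * bRho m
      = prodSwaps (L0 ++ [p1]) * (Equiv.swap p2.1 p2.2 * bRho m) := by
    rw [hps, hL, show L0 ++ [p1, p2] = (L0 ++ [p1]) ++ [p2] by simp, prodSwaps_append,
      mul_assoc]
    rw [show prodSwaps [p2] = Equiv.swap p2.1 p2.2 by simp [prodSwaps]]
  have hnr : ¬ Relation.EqvGen (fun u v => (bRho m) u = v) p2.1 p2.2 := by
    intro h
    have := eqvGen_invariant (f := ⇑(bRho m)) (F := Prod.snd) (fun x => rfl) h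
    simp [hp2] at this
  have hb1 := orbitCount_swap_mul_lt hnr
  have hb2 := rho_orbit_le hm
  have hb3 := orbitCount_prodSwaps_mul_le (L0 ++ [p1]) (Equiv.swap p2.1 p2.2 * bRho m)
  have hlen2 : (L0 ++ [p1]).length + 1 = L.length := by
    rw [hL]
    simp
  rw [orbitCount_phi_eq, hsplit]
  omega

end Upper


section Cross
variable {m : ℕ}

lemma not_interlace_self (B : Bouquet m) (i : ZMod (2*m)) : ¬ Interlace B i i := by
  simp only [Interlace, Xor', Xor]
  omega

lemma not_interlace_sigma (B : Bouquet m) (i : ZMod (2*m)) : ¬ Interlace B i (B.σ i) := by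
  simp only [Interlace, Xor', Xor, B.invol]
  omega

lemma interlace_sigma_left (B : Bouquet m) (i j : ZMod (2*m)) :
    Interlace B (B.σ i) j ↔ Interlace B i j := by
  simp only [Interlace, B.invol]
  rw [min_comm, max_comm]

lemma interlace_sigma_right (B : Bouquet m) (i j : ZMod (2*m)) :
    Interlace B i (B.σ j) ↔ Interlace B i j := by
  simp only [Interlace, B.invol, Xor', Xor]
  tauto

set_option maxHeartbeats 1600000 in
lemma orbit_upper_cross (hm : m ≠ 0) (B : Bouquet m) (htw : ∀ i, B.t i = false)
    {a x : ZMod (2*m)} (hcr : Interlace B a x) : orbitCount (Phi B) ≤ 2*m := by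
  haveI : NeZero (2*m) := ⟨by omega⟩
  have hM : 1 < 2*m := by omega
  have hvinj : ∀ u v : ZMod (2*m), u.val = v.val → u = v :=
    fun u v h => ZMod.val_injective (2*m) h
  -- wlog, replace a by its min endpoint and x by its min endpoint
  wlog hav : a.val < (B.σ a).val generalizing a
  · refine this (a := B.σ a) ((interlace_sigma_left B a x).2 hcr) ?_
    rw [B.invol]
    have h1 : (B.σ a).val ≠ a.val := fun h => B.fpf a (hvinj _ _ h)
    omega
  wlog hxv : x.val < (B.σ x).val generalizing x
  · refine this (x := B.σ x) ((interlace_sigma_right B a x).2 hcr) ?_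
    rw [B.invol]
    have h1 : (B.σ x).val ≠ x.val := fun h => B.fpf x (hvinj _ _ h)
    omega
  set b := B.σ a with hb
  set y := B.σ x with hy
  have hab : a ≠ b := fun h => B.fpf a (h ▸ hb.symm)
  have hxa : x ≠ a := fun h => (not_interlace_self B a) (h ▸ hcr)
  have hxb : x ≠ b := fun h => (not_interlace_sigma B a) (by rw [← hb]; exact h ▸ hcr)
  have hya : y ≠ a := fun h => hxb (by rw [← B.invol x, ← hy, h, hb])
  have hyb : y ≠ b := fun h => hxa (by rw [← B.invol x, ← hy, h, hb, B.invol])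
  have hxy : x ≠ y := fun h => B.fpf x (h ▸ hy.symm)
  -- exactly one of x, y lies in [a.val, b.val)
  have hxav : x.val ≠ a.val := fun h => hxa (hvinj _ _ h)
  have hxbv : x.val ≠ b.val := fun h => hxb (hvinj _ _ h)
  have hyav : y.val ≠ a.val := fun h => hya (hvinj _ _ h)
  have hybv : y.val ≠ b.val := fun h => hyb (hvinj _ _ h)
  have hone : (a.val ≤ x.val ∧ x.val < b.val) ↔ ¬ (a.val ≤ y.val ∧ y.val < b.val) := by
    have h1 : Xor' (min a.val (B.σ a).val < x.val ∧ x.val < max a.val (B.σ a).val)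
        (min a.val (B.σ a).val < (B.σ x).val ∧ (B.σ x).val < max a.val (B.σ a).val) := hcr
    rw [← hb, ← hy] at h1
    unfold Xor' Xor at h1
    omega
  -- the invariant for swap (a,F) (b,F) * rho
  set g1 : Equiv.Perm (ZMod (2*m) × Bool) :=
    Equiv.swap ((a,false) : ZMod (2*m) × Bool) (b,false) * bRho m with hg1
  set Jf : ZMod (2*m) × Bool → ℕ := fun p =>
    if p.2 then 2 else (if a.val ≤ p.1.val ∧ p.1.val < b.val then 0 else 1) with hJf
  have hg1app : ∀ z : ZMod (2*m) × Bool,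
      g1 z = Equiv.swap ((a,false) : ZMod (2*m) × Bool) (b,false) ((bRho m) z) := fun z => rfl
  have hJinv : ∀ z, Jf (g1 z) = Jf z := by
    rintro ⟨i, _ | _⟩
    · rw [hg1app]
      have hrho : (bRho m) ((i, false) : ZMod (2*m) × Bool) = (i + 1, false) := rfl
      rw [hrho]
      by_cases hia : i + 1 = a
      · rw [hia, Equiv.swap_apply_left]
        have hi : i = a - 1 := by rw [← hia]; ring
        have hcas := val_sub_one_cases hM a
        have hbv := ZMod.val_lt b
        have hav2 := ZMod.val_lt a
        simp only [hJf, hi, if_false, Bool.false_eq_true, if_neg (Bool.false_ne_true)]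
        rcases hcas with ⟨h1, h2⟩ | ⟨h1, h2⟩ <;> rw [h2] <;>
          · split_ifs <;> omega
      · by_cases hib : i + 1 = b
        · rw [hib, Equiv.swap_apply_right]
          have hi : i = b - 1 := by rw [← hib]; ring
          have hcas := val_sub_one_cases hM b
          have hbv := ZMod.val_lt b
          simp only [hJf, hi, if_neg (Bool.false_ne_true)]
          rcases hcas with ⟨h1, h2⟩ | ⟨h1, h2⟩ <;> rw [h2] <;>
            · split_ifs <;> omega
        · rw [Equiv.swap_apply_of_ne_of_ne (by simpa using hia) (by simpa using hib)]
          have hiav : (i+1).val ≠ a.val := fun h => hia (hvinj _ _ h)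
          have hibv : (i+1).val ≠ b.val := fun h => hib (hvinj _ _ h)
          have hcas := val_add_one_cases hM i
          have hbv := ZMod.val_lt b
          have hav2 := ZMod.val_lt a
          simp only [hJf, if_neg (Bool.false_ne_true)]
          rcases hcas with ⟨h1, h2⟩ | ⟨h1, h2⟩ <;> rw [h2] at hiav hibv ⊢ <;>
            · split_ifs <;> omega
    · rw [hg1app]
      have hrho : (bRho m) ((i, true) : ZMod (2*m) × Bool) = (i - 1, true) := rfl
      rw [hrho, Equiv.swap_apply_of_ne_of_ne (by simp) (by simp)]
      simp [hJf]
  have hnr : ¬ Relation.EqvGen (fun u v => g1 u = v)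
      ((x, false) : ZMod (2*m) × Bool) (y, false) := by
    intro h
    have := eqvGen_invariant (f := ⇑g1) (F := Jf) hJinv h
    simp only [hJf, if_neg (Bool.false_ne_true)] at this
    split_ifs at this <;> omega
  -- set up the list of swaps
  set P8 : Finset (ZMod (2*m) × Bool) :=
    ({a, b, x, y} ×ˢ (Finset.univ : Finset Bool)) with hP8
  have hP8mem : ∀ z : ZMod (2*m) × Bool, z ∈ P8 ↔ z.1 = a ∨ z.1 = b ∨ z.1 = x ∨ z.1 = y := by
    intro z
    simp [hP8, Finset.mem_product, Finset.mem_insert]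
  set T := Finset.univ \ P8 with hT
  have hTmem : ∀ z : ZMod (2*m) × Bool,
      z ∈ T ↔ ¬ (z.1 = a ∨ z.1 = b ∨ z.1 = x ∨ z.1 = y) := by
    intro z
    rw [hT, Finset.mem_sdiff, hP8mem]
    simp
  have hTinv : ∀ z ∈ T, (bIot B) z ∈ T := by
    rintro ⟨i, s⟩ hz
    rw [hTmem] at hz ⊢
    push_neg at hz ⊢
    obtain ⟨hz1, hz2, hz3, hz4⟩ := hz
    have hfst : ((bIot B) (i, s)).1 = B.σ i := rfl
    rw [hfst]
    refine ⟨?_, ?_, ?_, ?_⟩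
    · intro h; exact hz2 (by rw [← B.invol i, h, ← hb])
    · intro h; exact hz1 (by rw [← B.invol i, h, hb, B.invol])
    · intro h; exact hz4 (by rw [← B.invol i, h, ← hy])
    · intro h; exact hz3 (by rw [← B.invol i, h, hy, B.invol])
  obtain ⟨L0, hL1, hL2, hL3⟩ := exists_swap_list (⇑(bIot B)) (bIot_invol B) T.card T le_rfl
    hTinv (fun z _ => bIot_fpf B z)
  set q1 : (ZMod (2*m) × Bool) × (ZMod (2*m) × Bool) := ((a,true),(b,true)) with hq1
  set q2 : (ZMod (2*m) × Bool) × (ZMod (2*m) × Bool) := ((x,true),(y,true)) with hq2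
  set q3 : (ZMod (2*m) × Bool) × (ZMod (2*m) × Bool) := ((x,false),(y,false)) with hq3
  set q4 : (ZMod (2*m) × Bool) × (ZMod (2*m) × Bool) := ((a,false),(b,false)) with hq4
  set L := L0 ++ [q1, q2, q3, q4] with hL
  have hta : B.t a = false := htw a
  have htx : B.t x = false := htw x
  have hL1' : ∀ p ∈ L, (bIot B) p.1 = p.2 := by
    intro p hp
    rw [hL, List.mem_append] at hp
    rcases hp with hp | hp
    · exact hL1 p hp
    · simp only [List.mem_cons, List.mem_singleton] at hp
      rcases hp with rfl | rfl | rfl | rfl | h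
      · show (B.σ a, xor true (B.t a)) = (b, true)
        rw [hta, ← hb]; rfl
      · show (B.σ x, xor true (B.t x)) = (y, true)
        rw [htx, ← hy]; rfl
      · show (B.σ x, xor false (B.t x)) = (y, false)
        rw [htx, ← hy]; rfl
      · show (B.σ a, xor false (B.t a)) = (b, false)
        rw [hta, ← hb]; rfl
      · exact absurd h (by simp)
  have hflat : flatPairs L = flatPairs L0 ++
      [(a,true),(b,true),(x,true),(y,true),(x,false),(y,false),(a,false),(b,false)] := by
    rw [hL, flatPairs_append]
    rfl
  have h8P : ∀ w : ZMod (2*m) × Bool,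
      w ∈ ([(a,true),(b,true),(x,true),(y,true),(x,false),(y,false),(a,false),(b,false)] :
        List (ZMod (2*m) × Bool)) ↔ w ∈ P8 := by
    intro w
    rw [hP8mem]
    rcases w with ⟨i, s⟩
    simp only [List.mem_cons, List.mem_singleton, Prod.mk.injEq]
    cases s <;> simp <;> tauto
  have hnd : (flatPairs L).Nodup := by
    rw [hflat]
    refine List.Nodup.append hL2 ?_ ?_
    · simp [List.nodup_cons, Prod.mk.injEq, hab, hxa, hxb, hya, hyb, hxy,
        hab.symm, hxa.symm, hxb.symm, hya.symm, hyb.symm, hxy.symm]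
    · intro w hw hw2
      have h1 : w ∈ T := (hL3 w).1 hw
      have h2 : w ∈ P8 := (h8P w).1 hw2
      rw [hTmem] at h1
      rw [hP8mem] at h2
      exact h1 h2
  have hall : ∀ z : ZMod (2*m) × Bool, z ∈ flatPairs L := by
    intro z
    rw [hflat, List.mem_append, h8P, hL3, hTmem, hP8mem]
    tauto
  have hps : bIot B = prodSwaps L := by
    refine Equiv.ext fun z => ?_
    rw [prodSwaps_eq_invol (⇑(bIot B)) (bIot_invol B) L hL1' hnd z, if_pos (hall z)]
  have hlen : 2 * L.length = 4 * m := by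
    have h1 := flatPairs_length L
    have h2 : (flatPairs L).toFinset.card = (flatPairs L).length :=
      List.toFinset_card_of_nodup hnd
    have h3 : (flatPairs L).toFinset = Finset.univ := by
      ext z; simp [hall z]
    rw [h3] at h2
    have h4 : (Finset.univ : Finset (ZMod (2*m) × Bool)).card = 4 * m := by
      rw [Finset.card_univ, Fintype.card_prod, ZMod.card, Fintype.card_bool]
      ring
    omega
  have hsplit : bIot B * bRho m = prodSwaps (L0 ++ [q1, q2]) *
      (Equiv.swap q3.1 q3.2 * (Equiv.swap q4.1 q4.2 * bRho m)) := by
    rw [hps, hL, show L0 ++ [q1, q2, q3, q4] = (L0 ++ [q1, q2]) ++ ([q3] ++ [q4]) by simp,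
      prodSwaps_append, prodSwaps_append, prodSwaps_append, mul_assoc, mul_assoc,
      show prodSwaps [q3] = Equiv.swap q3.1 q3.2 by simp [prodSwaps],
      show prodSwaps [q4] = Equiv.swap q4.1 q4.2 by simp [prodSwaps], mul_assoc]
    simp only [mul_assoc]
  -- counting
  have hc1 : orbitCount ⇑(Equiv.swap q4.1 q4.2 * bRho m) ≤ 3 := by
    have := orbitCount_swap_mul_le (bRho m) q4.1 q4.2
    have h2 := rho_orbit_le hm
    omega
  have hc2 : orbitCount ⇑(Equiv.swap q3.1 q3.2 * (Equiv.swap q4.1 q4.2 * bRho m)) + 1 ≤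
      orbitCount ⇑(Equiv.swap q4.1 q4.2 * bRho m) := orbitCount_swap_mul_lt hnr
  have hc3 := orbitCount_prodSwaps_mul_le (L0 ++ [q1, q2])
    (Equiv.swap q3.1 q3.2 * (Equiv.swap q4.1 q4.2 * bRho m))
  have hlen2 : (L0 ++ [q1, q2]).length + 2 = L.length := by
    rw [hL]; simp
  rw [orbitCount_phi_eq, hsplit]
  omega

end Cross


section CoreIff
variable {m : ℕ}

theorem orbit_core (hm : m ≠ 0) (B : Bouquet m) :
    2*m + 2 ≤ orbitCount (Phi B) ↔
      ((∀ i, B.t i = false) ∧ ∀ i j, ¬ Interlace B i j) := by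
  constructor
  · intro h
    by_cases ht : ∀ i, B.t i = false
    · refine ⟨ht, ?_⟩
      intro i j hij
      have := orbit_upper_cross hm B ht hij
      omega
    · exfalso
      push_neg at ht
      obtain ⟨i, hi⟩ := ht
      have hi' : B.t i = true := by simpa using hi
      have := orbit_upper_twisted hm B hi'
      omega
  · rintro ⟨h1, h2⟩
    exact orbit_lower hm B h1 h2

theorem eulerGenus_zero_iff (hm : m ≠ 0) (B : Bouquet m) :
    eulerGenus B = 0 ↔ ((∀ i, B.t i = false) ∧ ∀ i j, ¬ Interlace B i j) := by
  rw [eulerGenus, numBoundary, if_neg hm, ← orbit_core hm B]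
  omega

end CoreIff

section Restrict
variable {n : ℕ}

lemma card_even_of_invariant (B : Bouquet n) (S : Finset (ZMod (2*n)))
    (hS : ∀ i ∈ S, B.σ i ∈ S) : S.card = 2 * (S.card / 2) := by
  suffices h : Even S.card by
    obtain ⟨r, hr⟩ := h
    omega
  have key : ∀ (N : ℕ) (S : Finset (ZMod (2*n))), S.card ≤ N →
      (∀ i ∈ S, B.σ i ∈ S) → Even S.card := by
    intro N
    induction N with
    | zero =>
      intro S hc _
      rw [Nat.le_zero.1 hc]
      exact Even.zero
    | succ N ih =>
      intro S hc hinv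
      by_cases hemp : S = ∅
      · subst hemp; simp
      · obtain ⟨a, ha⟩ := Finset.nonempty_iff_ne_empty.2 hemp
        have hia : B.σ a ∈ S := hinv a ha
        have hia' : B.σ a ≠ a := B.fpf a
        set S' := (S.erase a).erase (B.σ a) with hS'
        have hmem' : ∀ x, x ∈ S' ↔ (x ∈ S ∧ x ≠ a ∧ x ≠ B.σ a) := by
          intro x
          simp only [hS', Finset.mem_erase]
          tauto
        have h4 : (S.erase a).card = S.card - 1 := Finset.card_erase_of_mem ha
        have h5 : S'.card = (S.erase a).card - 1 :=
          Finset.card_erase_of_mem (Finset.mem_erase.2 ⟨hia', hia⟩)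
        have h6 : 1 ≤ (S.erase a).card :=
          Finset.card_pos.2 ⟨B.σ a, Finset.mem_erase.2 ⟨hia', hia⟩⟩
        have h7 : 1 ≤ S.card := Finset.card_pos.2 ⟨a, ha⟩
        have hinv' : ∀ i ∈ S', B.σ i ∈ S' := by
          intro i hi
          rw [hmem'] at hi ⊢
          obtain ⟨hi1, hi2, hi3⟩ := hi
          refine ⟨hinv i hi1, ?_, ?_⟩
          · intro hh; exact hi3 (by rw [← B.invol i, hh])
          · intro hh
            exact hi2 (by have := congrArg B.σ hh; rwa [B.invol, B.invol] at this)
        have := ih S' (by omega) hinv'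
        obtain ⟨r, hr⟩ := this
        exact ⟨r + 1, by omega⟩
  exact key S.card S le_rfl hS

lemma transport_t {m : ℕ} (hm : m ≠ 0) (B : Bouquet n) (S : Finset (ZMod (2*n)))
    (hS : ∀ i ∈ S, B.σ i ∈ S) (e : ZMod (2*m) ≃ {x : ZMod (2*n) // x ∈ S})
    (x : ZMod (2*m)) :
    (transport hm B S hS e).t x = B.t (e x) := rfl

lemma transport_sigma {m : ℕ} (hm : m ≠ 0) (B : Bouquet n) (S : Finset (ZMod (2*n)))
    (hS : ∀ i ∈ S, B.σ i ∈ S) (e : ZMod (2*m) ≃ {x : ZMod (2*n) // x ∈ S})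
    (x : ZMod (2*m)) :
    ((e ((transport hm B S hS e).σ x) : {x : ZMod (2*n) // x ∈ S}) : ZMod (2*n))
      = B.σ (e x) := by
  show ((e (e.symm ⟨B.σ (e x), hS _ (e x).2⟩) : {x : ZMod (2*n) // x ∈ S}) : ZMod (2*n)) = _
  rw [Equiv.apply_symm_apply]

lemma transport_interlace {m : ℕ} (hm : m ≠ 0) (B : Bouquet n) (S : Finset (ZMod (2*n)))
    (hS : ∀ i ∈ S, B.σ i ∈ S) (e : ZMod (2*m) ≃ {x : ZMod (2*n) // x ∈ S})
    (hval : ∀ u v : ZMod (2*m), u.val < v.val ↔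
      ((e u : {x : ZMod (2*n) // x ∈ S}) : ZMod (2*n)).val <
      ((e v : {x : ZMod (2*n) // x ∈ S}) : ZMod (2*n)).val)
    (x y : ZMod (2*m)) :
    Interlace (transport hm B S hS e) x y ↔ Interlace B (e x) (e y) := by
  set B' := transport hm B S hS e with hB'
  have hsx : (B.σ ((e x : {x : ZMod (2*n) // x ∈ S}) : ZMod (2*n))).val
      = ((e (B'.σ x) : {x : ZMod (2*n) // x ∈ S}) : ZMod (2*n)).val :=
    (congrArg ZMod.val (transport_sigma hm B S hS e x)).symm
  have hsy : (B.σ ((e y : {x : ZMod (2*n) // x ∈ S}) : ZMod (2*n))).val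
      = ((e (B'.σ y) : {x : ZMod (2*n) // x ∈ S}) : ZMod (2*n)).val :=
    (congrArg ZMod.val (transport_sigma hm B S hS e y)).symm
  simp only [Interlace, Xor', min_lt_iff, lt_max_iff, hsx, hsy, ← hval]

end Restrict


section RestrictSpec
variable {n : ℕ}

lemma restrict_spec (B : Bouquet n) (S : Finset (ZMod (2*n)))
    (h : n ≠ 0 ∧ S.card / 2 ≠ 0 ∧ S.card = 2 * (S.card / 2) ∧ ∀ i ∈ S, B.σ i ∈ S) :
    ∃ e : ZMod (2*(S.card/2)) ≃ {x : ZMod (2*n) // x ∈ S},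
      (∀ u v : ZMod (2*(S.card/2)), u.val < v.val ↔
        ((e u : {x : ZMod (2*n) // x ∈ S}) : ZMod (2*n)).val <
        ((e v : {x : ZMod (2*n) // x ∈ S}) : ZMod (2*n)).val) ∧
      B.restrict S = B.transport h.2.1 S h.2.2.2 e := by
  haveI h1 : NeZero (2*n) := ⟨by have := h.1; omega⟩
  haveI h2 : NeZero (2*(S.card/2)) := ⟨by have := h.2.1; omega⟩
  have hc : (S.image (zmodFinEquiv (2*n))).card = 2*(S.card/2) := by
    rw [Finset.card_image_of_injective _ (zmodFinEquiv (2*n)).injective]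
    exact h.2.2.1
  refine ⟨(zmodFinEquiv (2*(S.card/2))).trans
      (((S.image (zmodFinEquiv (2*n))).orderIsoOfFin hc).toEquiv.trans
        (Equiv.subtypeEquiv (zmodFinEquiv (2*n)).symm (by
          intro a
          simp only [Finset.mem_image]
          constructor
          · rintro ⟨b, hb, rfl⟩; simpa using hb
          · intro ha; exact ⟨(zmodFinEquiv (2*n)).symm a, ha, by simp⟩))), ?_, ?_⟩
  · intro u v
    have hE : ∀ w : Fin (2*n), ((zmodFinEquiv (2*n)).symm w : ZMod (2*n)).val = (w : ℕ) := by
      intro w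
      show (((w : ℕ) : ZMod (2*n))).val = (w : ℕ)
      exact ZMod.val_cast_of_lt w.isLt
    show u.val < v.val ↔
      ((zmodFinEquiv (2*n)).symm _ : ZMod (2*n)).val < ((zmodFinEquiv (2*n)).symm _ : ZMod (2*n)).val
    rw [hE, hE]
    constructor
    · intro hlt
      have h3 : zmodFinEquiv (2*(S.card/2)) u < zmodFinEquiv (2*(S.card/2)) v := hlt
      have h4 := (OrderIso.lt_iff_lt ((S.image (zmodFinEquiv (2*n))).orderIsoOfFin hc)).2 h3
      exact h4
    · intro hlt
      have h4 : ((S.image (zmodFinEquiv (2*n))).orderIsoOfFin hc) (zmodFinEquiv _ u) <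
          ((S.image (zmodFinEquiv (2*n))).orderIsoOfFin hc) (zmodFinEquiv _ v) := hlt
      have h3 := (OrderIso.lt_iff_lt _).1 h4
      exact h3
  · rw [restrict, dif_pos h]

lemma eulerGenus_restrict_empty (B : Bouquet n) : eulerGenus (B.restrict ∅) = 0 := by
  rw [restrict, dif_neg (by simp)]
  rw [eulerGenus, numBoundary, if_pos (by simp)]
  simp

lemma restrict_eulerGenus_zero_iff (hn : n ≠ 0) (B : Bouquet n) (S : Finset (ZMod (2*n)))
    (hS : ∀ i ∈ S, B.σ i ∈ S) :
    eulerGenus (B.restrict S) = 0 ↔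
      ((∀ i ∈ S, B.t i = false) ∧ ∀ i j, i ∈ S → j ∈ S → ¬ Interlace B i j) := by
  haveI : NeZero (2*n) := ⟨by omega⟩
  by_cases hemp : S = ∅
  · subst hemp
    rw [eulerGenus_restrict_empty]
    simp
  · have heven : S.card = 2 * (S.card / 2) := card_even_of_invariant B S hS
    have hpos : 0 < S.card := Finset.card_pos.2 (Finset.nonempty_iff_ne_empty.2 hemp)
    have hk : S.card / 2 ≠ 0 := by omega
    have hcond : n ≠ 0 ∧ S.card / 2 ≠ 0 ∧ S.card = 2 * (S.card / 2) ∧ ∀ i ∈ S, B.σ i ∈ S :=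
      ⟨hn, hk, heven, hS⟩
    obtain ⟨e, hval, heq⟩ := restrict_spec B S hcond
    rw [heq, eulerGenus_zero_iff hcond.2.1]
    constructor
    · rintro ⟨h1, h2⟩
      constructor
      · intro i hi
        have := h1 (e.symm ⟨i, hi⟩)
        rw [transport_t, Equiv.apply_symm_apply] at this
        exact this
      · intro i j hi hj hij
        refine h2 (e.symm ⟨i, hi⟩) (e.symm ⟨j, hj⟩) ?_
        rw [transport_interlace hcond.2.1 B S hcond.2.2.2 e hval,
          Equiv.apply_symm_apply, Equiv.apply_symm_apply]
        exact hij
    · rintro ⟨h1, h2⟩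
      constructor
      · intro x
        rw [transport_t]
        exact h1 _ (e x).2
      · intro x y hxy
        rw [transport_interlace hcond.2.1 B S hcond.2.2.2 e hval] at hxy
        exact h2 _ _ (e x).2 (e y).2 hxy

end RestrictSpec


lemma n0_no_interlace (B : Bouquet 0) (i j : ZMod (2*0)) : ¬ Interlace B i j := by
  have hσ : ∀ x : ZMod (2*0), B.σ x = -(x+1) := B.pin_σ rfl
  have hstep : ((-(i+1) : ZMod (2*0))).val = i.val + 1 ∨
      i.val = ((-(i+1) : ZMod (2*0))).val + 1 := by
    let z : ℤ := i
    show ((-(z+1) : ℤ)).natAbs = z.natAbs + 1 ∨ z.natAbs = ((-(z+1) : ℤ)).natAbs + 1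
    omega
  simp only [Interlace, hσ, Xor', Xor]
  omega


/-- The partial-dual Euler genus polynomial of a bouquet has non-zero constant term
if and only if every chord is untwisted and the intersection graph is bipartite
(i.e. the chords admit a proper 2-colouring with interlacing chords coloured
differently). -/
theorem pdPoly_coeff_zero_ne_zero_iff {n : ℕ} (B : Bouquet n) :
    (pdPoly B).coeff 0 ≠ 0 ↔
      ((∀ i, B.t i = false) ∧
        ∃ color : ZMod (2*n) → Bool, (∀ i, color (B.σ i) = color i) ∧
          ∀ i j, Interlace B i j → color i ≠ color j) := by
  by_cases hn : n = 0
  · subst hn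
    have hL : (pdPoly B).coeff 0 ≠ 0 := by
      rw [pdPoly, dif_pos rfl]
      simp
    refine iff_of_true hL ⟨B.pin_t rfl, fun _ => false, fun i => rfl, ?_⟩
    intro i j hij
    exact absurd hij (n0_no_interlace B i j)
  · haveI : NeZero (2*n) := ⟨by omega⟩
    rw [pdPoly, dif_neg hn, Polynomial.finset_sum_coeff]
    simp only [Polynomial.coeff_X_pow]
    constructor
    · intro hne
      obtain ⟨S, hSmem, hSne⟩ := Finset.exists_ne_zero_of_sum_ne_zero hne
      rw [Finset.mem_filter] at hSmem
      have hS : ∀ i ∈ S, B.σ i ∈ S := hSmem.2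
      have hexp : eulerGenus (B.restrict S) + eulerGenus (B.restrict Sᶜ) = 0 := by
        by_cases hcase : (0 : ℕ) = eulerGenus (B.restrict S) + eulerGenus (B.restrict Sᶜ)
        · omega
        · rw [if_neg hcase] at hSne
          exact absurd rfl hSne
      have hSc : ∀ i ∈ Sᶜ, B.σ i ∈ Sᶜ := by
        intro i hi
        rw [Finset.mem_compl] at hi ⊢
        intro hmem
        exact hi (by have := hS _ hmem; rwa [B.invol] at this)
      have hg1 := (restrict_eulerGenus_zero_iff hn B S hS).1 (by omega)
      have hg2 := (restrict_eulerGenus_zero_iff hn B Sᶜ hSc).1 (by omega)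
      refine ⟨?_, fun i => decide (i ∈ S), ?_, ?_⟩
      · intro i
        by_cases hi : i ∈ S
        · exact hg1.1 i hi
        · exact hg2.1 i (Finset.mem_compl.2 hi)
      · intro i
        have hiff : B.σ i ∈ S ↔ i ∈ S := by
          constructor
          · intro h
            have := hS _ h
            rwa [B.invol] at this
          · exact hS i
        exact decide_eq_decide.2 hiff
      · intro i j hij heq
        rw [decide_eq_decide] at heq
        by_cases hi : i ∈ S
        · exact hg1.2 i j hi (heq.1 hi) hij
        · exact hg2.2 i j (Finset.mem_compl.2 hi)
            (Finset.mem_compl.2 (fun hj => hi (heq.2 hj))) hij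
    · rintro ⟨ht, color, hcinv, hcne⟩
      set S : Finset (ZMod (2*n)) := Finset.univ.filter (fun i => color i = false) with hSdef
      have hmemS : ∀ i, i ∈ S ↔ color i = false := by
        intro i
        simp [hSdef]
      have hmemSc : ∀ i, i ∈ Sᶜ ↔ color i = true := by
        intro i
        rw [Finset.mem_compl, hmemS]
        cases h : color i <;> simp
      have hS : ∀ i ∈ S, B.σ i ∈ S := by
        intro i hi
        rw [hmemS] at hi ⊢
        rw [hcinv]
        exact hi
      have hSc : ∀ i ∈ Sᶜ, B.σ i ∈ Sᶜ := by
        intro i hi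
        rw [hmemSc] at hi ⊢
        rw [hcinv]
        exact hi
      have hg1 : eulerGenus (B.restrict S) = 0 := by
        refine (restrict_eulerGenus_zero_iff hn B S hS).2 ⟨fun i _ => ht i, ?_⟩
        intro i j hi hj hij
        have := hcne i j hij
        rw [hmemS] at hi hj
        rw [hi, hj] at this
        exact this rfl
      have hg2 : eulerGenus (B.restrict Sᶜ) = 0 := by
        refine (restrict_eulerGenus_zero_iff hn B Sᶜ hSc).2 ⟨fun i _ => ht i, ?_⟩
        intro i j hi hj hij
        have := hcne i j hij
        rw [hmemSc] at hi hj
        rw [hi, hj] at this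
        exact this rfl
      have hmem : S ∈ Finset.univ.filter
          (fun S : Finset (ZMod (2*n)) => ∀ i ∈ S, B.σ i ∈ S) :=
        Finset.mem_filter.2 ⟨Finset.mem_univ _, hS⟩
      have hone : (fun T : Finset (ZMod (2*n)) =>
          if (0 : ℕ) = eulerGenus (B.restrict T) + eulerGenus (B.restrict Tᶜ)
          then (1 : ℤ) else 0) S = 1 := by
        simp [hg1, hg2]
      have hle := Finset.single_le_sum (s := Finset.univ.filter
          (fun S : Finset (ZMod (2*n)) => ∀ i ∈ S, B.σ i ∈ S))
        (f := fun T : Finset (ZMod (2*n)) =>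
          if (0 : ℕ) = eulerGenus (B.restrict T) + eulerGenus (B.restrict Tᶜ)
          then (1 : ℤ) else 0)
        (fun i _ => by positivity) hmem
      rw [(by exact hone : (if (0 : ℕ) = eulerGenus (B.restrict S) + eulerGenus (B.restrict Sᶜ) then (1 : ℤ) else 0) = 1)] at hle
      intro hzero
      rw [hzero] at hle
      omega

end Bouquet
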